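/- arXiv:1004.2810 — 2 statements merged into one kernel-verified Lean document; each statement's English description precedes it below -/
import Mathlib

section
/- For every faulty run ρ ∈ Faulty_{≥k}(A) there is a trace ν ∈ Faulty^{tr}_{≥k}(A ⊗ Obs) with Obs(proj_Σ(tr(ρ))) = proj_Σ(ν), and conversely, for every trace ν ∈ Faulty^{tr}_{≥k}(A ⊗ Obs) there is a run ρ ∈ Faulty_{≥k}(A) with Obs(proj_Σ(tr(ρ))) = proj_Σ(ν); the same correspondence holds between NonFaulty(A) and NonFaulty^{tr}(A ⊗ Obs). -/
namespace FD

/-- Events: observable letters, the silent event ε, and the fault event f. -/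
inductive Ev (A : Type) : Type
  | obs : A → Ev A
  | eps : Ev A
  | flt : Ev A

/-- A (finite) automaton over `Ev A`, given by an initial state and a transition relation. -/
structure Auto (Q A : Type) where
  init : Q
  trans : Q → Ev A → Q → Prop

variable {Q A S : Type}

/-- A run from a state, represented as the list of its steps (label, target state). -/
def IsRunFrom (M : Auto Q A) : Q → List (Ev A × Q) → Prop
  | _, [] => True
  | q, p :: rest => M.trans q p.1 p.2 ∧ IsRunFrom M p.2 rest

def IsRun (M : Auto Q A) (ρ : List (Ev A × Q)) : Prop := IsRunFrom M M.init ρ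

/-- The trace of a run: the sequence of its labels. -/
def tr (ρ : List (Ev A × Q)) : List (Ev A) := ρ.map Prod.fst

/-- Projection of a trace onto the observable alphabet Σ (erasing ε and f). -/
def projE : List (Ev A) → List A :=
  List.filterMap fun e => match e with | Ev.obs a => some a | _ => none

/-- A run is k-faulty if some step is labeled f and at least k steps occur after it. -/
def KFaulty (k : ℕ) (ρ : List (Ev A × Q)) : Prop :=
  ∃ i : Fin ρ.length, (ρ.get i).1 = Ev.flt ∧ ρ.length - (i.1 + 1) ≥ k

/-- A run is faulty if some step is labeled f. -/
def Faulty (ρ : List (Ev A × Q)) : Prop := ∃ i : Fin ρ.length, (ρ.get i).1 = Ev.flt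

/-- A dynamic observer: deterministic total automaton with a labeling giving the
set of currently watched events; unobserved events do not change the state. -/
structure Observer (S A : Type) [DecidableEq A] where
  init : S
  step : S → A → S
  L : S → Finset A
  stay : ∀ s a, a ∉ L s → step s a = s

variable [DecidableEq A]

/-- Transition function extended to words. -/
def Observer.run (O : Observer S A) (s : S) (w : List A) : S := w.foldl O.step s

/-- The transducer map of an observer, from a given state. -/
def Observer.outFrom (O : Observer S A) : S → List A → List A
  | _, [] => []
  | s, a :: w => if a ∈ O.L s then a :: O.outFrom (O.step s a) w else O.outFrom s w

/-- The transducer map of an observer (from its initial state). -/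
def Observer.out (O : Observer S A) (w : List A) : List A := O.outFrom O.init w

/-- The observation of a run of an automaton by an observer. -/
def obsOf (O : Observer S A) (ρ : List (Ev A × Q)) : List A := O.out (projE (tr ρ))

/-- (Obs,k)-diagnosability, separation form: no observation of a k-faulty run
coincides with an observation of a non-faulty run. -/
def ObsKDiag (M : Auto Q A) (O : Observer S A) (k : ℕ) : Prop :=
  ∀ ρ ρ' : List (Ev A × Q), IsRun M ρ → IsRun M ρ' → KFaulty k ρ → ¬ Faulty ρ' →
    obsOf O ρ ≠ obsOf O ρ'

/-- (Obs,k)-diagnosability via existence of a diagnoser D : Σ* → {0,1}. -/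
def HasDiagnoser (M : Auto Q A) (O : Observer S A) (k : ℕ) : Prop :=
  ∃ D : List A → Bool,
    (∀ ρ : List (Ev A × Q), IsRun M ρ → ¬ Faulty ρ → D (obsOf O ρ) = false) ∧
    (∀ ρ : List (Ev A × Q), IsRun M ρ → KFaulty k ρ → D (obsOf O ρ) = true)

/-- Static (Σ,k)-diagnosability with full observable alphabet Σ. -/
def StaticKDiag (M : Auto Q A) (k : ℕ) : Prop :=
  ∀ ρ ρ' : List (Ev A × Q), IsRun M ρ → IsRun M ρ' → KFaulty k ρ → ¬ Faulty ρ' →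
    projE (tr ρ) ≠ projE (tr ρ')

/-- The product automaton A ⊗ Obs. -/
def prodAO (M : Auto Q A) (O : Observer S A) : Auto (Q × S) A where
  init := (M.init, O.init)
  trans := fun p β p' =>
    (∃ a : A, M.trans p.1 (Ev.obs a) p'.1 ∧ p'.2 = O.step p.2 a ∧
      ((a ∈ O.L p.2 ∧ β = Ev.obs a) ∨ (a ∉ O.L p.2 ∧ β = Ev.eps)))
    ∨ ((β = Ev.eps ∨ β = Ev.flt) ∧ M.trans p.1 β p'.1 ∧ p'.2 = p.2)


section Aux

variable [DecidableEq A]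

/-- Is an event the fault event? -/
def isF : Ev A → Bool
  | Ev.flt => true
  | _ => false

lemma isF_eq_true_iff (e : Ev A) : isF e = true ↔ e = Ev.flt := by
  cases e <;> simp [isF]

/-- Lift a run of `M` to a run of the product, threading the observer state. -/
def lift (O : Observer S A) : S → List (Ev A × Q) → List (Ev A × (Q × S))
  | _, [] => []
  | s, (Ev.obs a, q) :: rest =>
      ((if a ∈ O.L s then Ev.obs a else Ev.eps), (q, O.step s a)) :: lift O (O.step s a) rest
  | s, (Ev.eps, q) :: rest => (Ev.eps, (q, s)) :: lift O s rest
  | s, (Ev.flt, q) :: rest => (Ev.flt, (q, s)) :: lift O s rest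

lemma lift_flt (O : Observer S A) : ∀ (ρ : List (Ev A × Q)) (s : S),
    (tr (lift O s ρ)).map isF = (tr ρ).map isF := by
  intro ρ
  induction ρ with
  | nil => intro s; rfl
  | cons p rest ih =>
    intro s
    obtain ⟨e, q⟩ := p
    cases e with
    | obs a =>
      by_cases h : a ∈ O.L s <;> simp [lift, tr, isF, h, ih] <;>
        simpa [tr] using ih (O.step s a)
    | eps => simp [lift, tr, isF]; simpa [tr] using ih s
    | flt => simp [lift, tr, isF]; simpa [tr] using ih s

lemma lift_proj (O : Observer S A) : ∀ (ρ : List (Ev A × Q)) (s : S),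
    projE (tr (lift O s ρ)) = O.outFrom s (projE (tr ρ)) := by
  intro ρ
  induction ρ with
  | nil => intro s; rfl
  | cons p rest ih =>
    intro s
    obtain ⟨e, q⟩ := p
    cases e with
    | obs a =>
      by_cases h : a ∈ O.L s
      · simp [lift, tr, projE, Observer.outFrom, h]
        simpa [tr, projE] using ih (O.step s a)
      · simp [lift, tr, projE, Observer.outFrom, h, O.stay s a h]
        simpa [tr, projE] using ih s
    | eps => simp [lift, tr, projE]; simpa [tr, projE] using ih s
    | flt => simp [lift, tr, projE]; simpa [tr, projE] using ih s

lemma lift_run (M : Auto Q A) (O : Observer S A) : ∀ (ρ : List (Ev A × Q)) (q : Q) (s : S),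
    IsRunFrom M q ρ → IsRunFrom (prodAO M O) (q, s) (lift O s ρ) := by
  intro ρ
  induction ρ with
  | nil => intro q s _; trivial
  | cons p rest ih =>
    intro q s hr
    obtain ⟨e, q'⟩ := p
    obtain ⟨ht, hrest⟩ := hr
    cases e with
    | obs a =>
      refine ⟨Or.inl ⟨a, ht, rfl, ?_⟩, ih q' (O.step s a) hrest⟩
      by_cases h : a ∈ O.L s
      · exact Or.inl ⟨h, by simp [h]⟩
      · exact Or.inr ⟨h, by simp [h]⟩
    | eps => exact ⟨Or.inr ⟨Or.inl rfl, ht, rfl⟩, ih q' s hrest⟩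
    | flt => exact ⟨Or.inr ⟨Or.inr rfl, ht, rfl⟩, ih q' s hrest⟩

/-- Project a run of the product down to a run of `M`. -/
lemma back_run (M : Auto Q A) (O : Observer S A) : ∀ (ν : List (Ev A × (Q × S))) (q : Q) (s : S),
    IsRunFrom (prodAO M O) (q, s) ν →
    ∃ ρ : List (Ev A × Q), IsRunFrom M q ρ ∧ (tr ρ).map isF = (tr ν).map isF ∧
      O.outFrom s (projE (tr ρ)) = projE (tr ν) := by
  intro ν
  induction ν with
  | nil => intro q s _; exact ⟨[], trivial, rfl, rfl⟩
  | cons p rest ih =>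
    intro q s hr
    obtain ⟨β, q', s'⟩ := p
    obtain ⟨ht, hrest⟩ := hr
    rcases ht with ⟨a, hta, hs', hβ⟩ | ⟨hβ, htb, hs'⟩
    · subst hs'
      obtain ⟨ρ, hρ, hf, hp⟩ := ih q' (O.step s a) hrest
      refine ⟨(Ev.obs a, q') :: ρ, ⟨hta, hρ⟩, ?_, ?_⟩
      · rcases hβ with ⟨_, rfl⟩ | ⟨_, rfl⟩ <;> simpa [tr, isF] using hf
      · rcases hβ with ⟨h, rfl⟩ | ⟨h, rfl⟩
        · simpa [tr, projE, Observer.outFrom, h] using hp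
        · simp only [tr, projE, List.map_cons, List.filterMap_cons, Observer.outFrom,
            if_neg h]
          simpa [tr, projE, O.stay s a h] using hp
    · rw [show s' = s from hs'] at hrest
      obtain ⟨ρ, hρ, hf, hp⟩ := ih q' s hrest
      rcases hβ with rfl | rfl
      · exact ⟨(Ev.eps, q') :: ρ, ⟨htb, hρ⟩, by simpa [tr, isF] using hf,
          by simpa [tr, projE] using hp⟩
      · exact ⟨(Ev.flt, q') :: ρ, ⟨htb, hρ⟩, by simpa [tr, isF] using hf,
          by simpa [tr, projE] using hp⟩

lemma kfaulty_of_map_eq {Q' : Type} {k : ℕ} {ρ : List (Ev A × Q)} {ν : List (Ev A × Q')}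
    (h : (tr ρ).map isF = (tr ν).map isF) (hk : KFaulty k ρ) : KFaulty k ν := by
  have hlen : ρ.length = ν.length := by
    have := congrArg List.length h
    simpa [tr] using this
  obtain ⟨i, hf, hge⟩ := hk
  refine ⟨⟨i.1, hlen ▸ i.isLt⟩, ?_, show ν.length - (i.1 + 1) ≥ k by omega⟩
  have h1 : i.1 < ((tr ρ).map isF).length := by simpa [tr] using i.isLt
  have h2 : i.1 < ((tr ν).map isF).length := by simpa [tr] using hlen ▸ i.isLt
  have := List.getElem_of_eq h h1
  simp only [List.getElem_map, tr] at this
  rw [← isF_eq_true_iff]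
  rw [← isF_eq_true_iff] at hf
  simp only [List.get_eq_getElem] at hf ⊢
  simpa [← this] using hf

lemma faulty_iff_kfaulty_zero {ρ : List (Ev A × Q)} : Faulty ρ ↔ KFaulty 0 ρ := by
  constructor
  · rintro ⟨i, hi⟩; exact ⟨i, hi, Nat.zero_le _⟩
  · rintro ⟨i, hi, _⟩; exact ⟨i, hi⟩

end Aux

/-- correspondence of runs of A and of the product A ⊗ Obs:
k-faulty runs of A correspond to k-faulty traces of A ⊗ Obs with matching
observations, and similarly for non-faulty runs. -/
theorem product_run_correspondence {Q A S : Type} [DecidableEq A]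
    (M : Auto Q A) (O : Observer S A) (k : ℕ) :
    (∀ ρ : List (Ev A × Q), IsRun M ρ → KFaulty k ρ →
      ∃ ν : List (Ev A × (Q × S)), IsRun (prodAO M O) ν ∧ KFaulty k ν ∧
        obsOf O ρ = projE (tr ν)) ∧
    (∀ ν : List (Ev A × (Q × S)), IsRun (prodAO M O) ν → KFaulty k ν →
      ∃ ρ : List (Ev A × Q), IsRun M ρ ∧ KFaulty k ρ ∧
        obsOf O ρ = projE (tr ν)) ∧
    (∀ ρ : List (Ev A × Q), IsRun M ρ → ¬ Faulty ρ →
      ∃ ν : List (Ev A × (Q × S)), IsRun (prodAO M O) ν ∧ ¬ Faulty ν ∧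
        obsOf O ρ = projE (tr ν)) ∧
    (∀ ν : List (Ev A × (Q × S)), IsRun (prodAO M O) ν → ¬ Faulty ν →
      ∃ ρ : List (Ev A × Q), IsRun M ρ ∧ ¬ Faulty ρ ∧
        obsOf O ρ = projE (tr ν)) := by
  refine ⟨?_, ?_, ?_, ?_⟩
  · intro ρ hr hk
    exact ⟨lift O O.init ρ, lift_run M O ρ M.init O.init hr,
      kfaulty_of_map_eq (lift_flt O ρ O.init).symm hk,
      (lift_proj O ρ O.init).symm⟩
  · intro ν hr hk
    obtain ⟨ρ, hρ, hf, hp⟩ := back_run M O ν M.init O.init hr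
    exact ⟨ρ, hρ, kfaulty_of_map_eq hf.symm hk, hp⟩
  · intro ρ hr hnf
    refine ⟨lift O O.init ρ, lift_run M O ρ M.init O.init hr, ?_,
      (lift_proj O ρ O.init).symm⟩
    intro hF
    exact hnf (faulty_iff_kfaulty_zero.mpr
      (kfaulty_of_map_eq (lift_flt O ρ O.init) (faulty_iff_kfaulty_zero.mp hF)))
  · intro ν hr hnf
    obtain ⟨ρ, hρ, hf, hp⟩ := back_run M O ν M.init O.init hr
    refine ⟨ρ, hρ, ?_, hp⟩
    intro hF
    exact hnf (faulty_iff_kfaulty_zero.mpr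
      (kfaulty_of_map_eq hf (faulty_iff_kfaulty_zero.mp hF)))

end FD
end

section
/- A is (Obs, k)-diagnosable if and only if the product automaton A ⊗ Obs is (Σ, k)-diagnosable (statically diagnosable with the full observable alphabet Σ). -/
namespace FD

variable {Q A S : Type}

variable [DecidableEq A]

/-- Lift a run of `M` to a run of the product, threading the observer state. -/
def liftRun (O : Observer S A) : S → List (Ev A × Q) → List (Ev A × (Q × S))
  | _, [] => []
  | s, (Ev.obs a, q) :: rest =>
      (if a ∈ O.L s then Ev.obs a else Ev.eps, (q, O.step s a)) :: liftRun O (O.step s a) rest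
  | s, (Ev.eps, q) :: rest => (Ev.eps, (q, s)) :: liftRun O s rest
  | s, (Ev.flt, q) :: rest => (Ev.flt, (q, s)) :: liftRun O s rest

lemma liftRun_flt (O : Observer S A) (s : S) (ρ : List (Ev A × Q)) :
    List.Forall₂ (fun (p : Ev A × Q) (p' : Ev A × (Q × S)) => (p.1 = Ev.flt ↔ p'.1 = Ev.flt))
      ρ (liftRun O s ρ) := by
  induction ρ generalizing s with
  | nil => exact List.Forall₂.nil
  | cons p rest ih =>
    obtain ⟨e, q⟩ := p
    cases e with
    | obs a =>
      refine List.Forall₂.cons ?_ (ih _)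
      by_cases h : a ∈ O.L s <;> simp [liftRun, h]
    | eps => exact List.Forall₂.cons (by simp) (ih _)
    | flt => exact List.Forall₂.cons (by simp) (ih _)

lemma liftRun_length (O : Observer S A) (s : S) (ρ : List (Ev A × Q)) :
    (liftRun O s ρ).length = ρ.length :=
  (liftRun_flt O s ρ).length_eq.symm

lemma faulty_lift (O : Observer S A) (s : S) (ρ : List (Ev A × Q)) :
    Faulty (liftRun O s ρ) ↔ Faulty ρ := by
  have h := liftRun_flt O s ρ
  have hl := h.length_eq
  constructor
  · rintro ⟨i, hf⟩
    exact ⟨⟨i.1, by omega⟩, (h.get _ _).2 hf⟩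
  · rintro ⟨i, hf⟩
    exact ⟨⟨i.1, by omega⟩, (h.get i.2 (by omega)).1 hf⟩

lemma kfaulty_lift (O : Observer S A) (s : S) (ρ : List (Ev A × Q)) (k : ℕ) :
    KFaulty k (liftRun O s ρ) ↔ KFaulty k ρ := by
  have h := liftRun_flt O s ρ
  have hl := h.length_eq
  constructor
  · rintro ⟨i, hf, hk⟩
    refine ⟨⟨i.1, by omega⟩, (h.get _ _).2 hf, ?_⟩
    show ρ.length - (i.1 + 1) ≥ k
    omega
  · rintro ⟨i, hf, hk⟩
    refine ⟨⟨i.1, by omega⟩, (h.get i.2 (by omega)).1 hf, ?_⟩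
    show (liftRun O s ρ).length - (i.1 + 1) ≥ k
    omega

lemma liftRun_isRun (M : Auto Q A) (O : Observer S A) :
    ∀ (ρ : List (Ev A × Q)) (q : Q) (s : S), IsRunFrom M q ρ →
      IsRunFrom (prodAO M O) (q, s) (liftRun O s ρ) := by
  intro ρ
  induction ρ with
  | nil => intro q s _; trivial
  | cons p rest ih =>
    rintro q s ⟨ht, hrest⟩
    obtain ⟨e, q'⟩ := p
    cases e with
    | obs a =>
      refine ⟨?_, ih q' (O.step s a) hrest⟩
      by_cases hm : a ∈ O.L s
      · simp only [if_pos hm]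
        exact Or.inl ⟨a, ht, rfl, Or.inl ⟨hm, rfl⟩⟩
      · simp only [if_neg hm]
        exact Or.inl ⟨a, ht, rfl, Or.inr ⟨hm, rfl⟩⟩
    | eps => exact ⟨Or.inr ⟨Or.inl rfl, ht, rfl⟩, ih q' s hrest⟩
    | flt => exact ⟨Or.inr ⟨Or.inr rfl, ht, rfl⟩, ih q' s hrest⟩

lemma liftRun_projE (O : Observer S A) (s : S) (ρ : List (Ev A × Q)) :
    projE (tr (liftRun O s ρ)) = O.outFrom s (projE (tr ρ)) := by
  induction ρ generalizing s with
  | nil => rfl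
  | cons p rest ih =>
    obtain ⟨e, q⟩ := p
    cases e with
    | obs a =>
      by_cases hm : a ∈ O.L s
      · have h2 := ih (O.step s a)
        simp [liftRun, tr, projE, Observer.outFrom, hm] at h2 ⊢
        exact h2
      · have hst := O.stay s a hm
        have h2 := ih s
        simp [liftRun, tr, projE, Observer.outFrom, hm, hst] at h2 ⊢
        exact h2
    | eps => simpa [liftRun, tr, projE] using ih s
    | flt => simpa [liftRun, tr, projE] using ih s

lemma unlift (M : Auto Q A) (O : Observer S A) :
    ∀ (σ : List (Ev A × (Q × S))) (q : Q) (s : S), IsRunFrom (prodAO M O) (q, s) σ →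
      ∃ ρ, IsRunFrom M q ρ ∧ liftRun O s ρ = σ := by
  intro σ
  induction σ with
  | nil => exact fun q s _ => ⟨[], trivial, rfl⟩
  | cons p rest ih =>
    rintro q s ⟨ht, hrest⟩
    obtain ⟨β, q', s'⟩ := p
    rcases ht with ⟨a, hM, hs', hβ⟩ | ⟨hβ, hM, hs'⟩
    · dsimp at hM hs' hβ hrest
      subst hs'
      obtain ⟨ρ, hρ, hlift⟩ := ih q' (O.step s a) hrest
      refine ⟨(Ev.obs a, q') :: ρ, ⟨hM, hρ⟩, ?_⟩
      rcases hβ with ⟨hm, rfl⟩ | ⟨hm, rfl⟩ <;> simp [liftRun, hm, hlift]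
    · dsimp at hM hs' hβ hrest
      subst hs'
      obtain ⟨ρ, hρ, hlift⟩ := ih q' s' hrest
      rcases hβ with rfl | rfl
      · exact ⟨(Ev.eps, q') :: ρ, ⟨hM, hρ⟩, by simp [liftRun, hlift]⟩
      · exact ⟨(Ev.flt, q') :: ρ, ⟨hM, hρ⟩, by simp [liftRun, hlift]⟩

/-- A is (Obs,k)-diagnosable iff the product A ⊗ Obs is
(Σ,k)-diagnosable (statically, with the full observable alphabet Σ). -/
theorem diagnosable_iff_product {Q A S : Type} [DecidableEq A]
    (M : Auto Q A) (O : Observer S A) (k : ℕ) :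
    ObsKDiag M O k ↔ StaticKDiag (prodAO M O) k := by
  constructor
  · intro hd σ σ' hσ hσ' hkf hnf
    obtain ⟨ρ, hρ, rfl⟩ := unlift M O σ M.init O.init hσ
    obtain ⟨ρ', hρ', rfl⟩ := unlift M O σ' M.init O.init hσ'
    have h := hd ρ ρ' hρ hρ' ((kfaulty_lift O O.init ρ k).1 hkf)
      (fun hf => hnf ((faulty_lift O O.init ρ').2 hf))
    rw [liftRun_projE, liftRun_projE]
    exact h
  · intro hd ρ ρ' hρ hρ' hkf hnf
    have h := hd (liftRun O O.init ρ) (liftRun O O.init ρ')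
      (liftRun_isRun M O ρ M.init O.init hρ) (liftRun_isRun M O ρ' M.init O.init hρ')
      ((kfaulty_lift O O.init ρ k).2 hkf)
      (fun hf => hnf ((faulty_lift O O.init ρ').1 hf))
    rw [liftRun_projE, liftRun_projE] at h
    exact h

end FD
end
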